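/- For every positive integer n, the n-th Bernoulli number satisfies Bₙ = ∑_{i=0}^{n} (-1)^i · [C(n+1, i+1)/C(n+i, i)] · S(n+i, i), where S denotes the Stirling numbers of the second kind. -/

import Mathlib

/-! With `E(x) = (eˣ - 1) / x` the Bernoulli series is `1 / E`. As `1 - E` has no constant term,
`1 / E ≡ ∑_{j ≤ n} (1 - E) ^ j = ∑_{i ≤ n} C(n+1, i+1) (-E) ^ i` modulo `xⁿ⁺¹`, and the
coefficient of `xⁿ` in `Eⁱ` is `i! S(n+i, i) / (n+i)!` because
`(eˣ - 1) ^ i = i! ∑ₘ S(m, i) xᵐ / m!`. -/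

open Finset

/-- Bell polynomials of the second kind: `bellB n k x` is
`B_{n,k}(x 1, x 2, …, x (n-k+1))`, summing over sequences of nonnegative
integers `ℓ 1, …` with `∑ i * ℓ i = n` and `∑ ℓ i = k`. -/
noncomputable def bellB (n k : ℕ) (x : ℕ → ℝ) : ℝ :=
  ∑ ℓ : Fin (n + 1) → Fin (n + 1),
    if (ℓ 0 : ℕ) = 0 ∧ (∑ i : Fin (n + 1), (i : ℕ) * (ℓ i : ℕ)) = n ∧ (∑ i : Fin (n + 1), (ℓ i : ℕ)) = k then
      (n.factorial : ℝ) / (∏ i : Fin (n + 1), ((ℓ i : ℕ).factorial : ℝ)) *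
        ∏ i : Fin (n + 1), (x (i : ℕ) / ((i : ℕ).factorial : ℝ)) ^ (ℓ i : ℕ)
    else 0

/-- Stirling numbers of the second kind (real-valued), with
`stirlingS 0 0 = 1` and `stirlingS n 0 = 0` for `n ≥ 1`. -/
noncomputable def stirlingS (n k : ℕ) : ℝ :=
  (1 / (k.factorial : ℝ)) *
    ∑ l ∈ Finset.range (k + 1), (-1 : ℝ) ^ (k - l) * (k.choose l) * (l : ℝ) ^ n

open PowerSeries Nat

theorem mul_sum_choose_succ_mul_neg_pow {R : Type*} [CommRing R] (a : R) (n : ℕ) :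
    a * ∑ i ∈ range (n + 1), ((n + 1).choose (i + 1) : R) * (-a) ^ i = 1 - (1 - a) ^ (n + 1) := by
  have hbinom : (1 - a) ^ (n + 1) = ∑ j ∈ range (n + 1 + 1), ((n + 1).choose j : R) * (-a) ^ j := by
    rw [sub_eq_neg_add, add_pow]
    exact sum_congr rfl fun j _ => by ring
  rw [hbinom, sum_range_succ' _ (n + 1), mul_sum, choose_zero_right, Nat.cast_one, pow_zero,
    mul_one, sub_add_cancel_right, ← sum_neg_distrib]
  exact sum_congr rfl fun i _ => by ring

theorem coeff_eq_sum_choose_mul_coeff_neg_pow {R : Type*} [CommRing R] {u E : R⟦X⟧}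
    (hu : u * E = 1) (hE : X ∣ 1 - E) (n : ℕ) :
    coeff n u = ∑ i ∈ range (n + 1), ((n + 1).choose (i + 1) : R) * coeff n ((-E) ^ i) := by
  set G := ∑ i ∈ range (n + 1), ((n + 1).choose (i + 1) : R⟦X⟧) * (-E) ^ i
  have hG : G - u = -(u * (1 - E) ^ (n + 1)) := by
    calc G - u = u * (E * G) - u := by rw [← mul_assoc, hu, one_mul]
      _ = -(u * (1 - E) ^ (n + 1)) := by rw [mul_sum_choose_succ_mul_neg_pow]; ring
  have hdvd : X ^ (n + 1) ∣ G - u :=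
    hG ▸ dvd_neg.mpr (dvd_mul_of_dvd_right (pow_dvd_pow_of_dvd hE _) u)
  have hcoeff := X_pow_dvd_iff.mp hdvd n n.lt_succ_self
  rw [map_sub, sub_eq_zero] at hcoeff
  rw [← hcoeff, map_sum]
  exact sum_congr rfl fun i _ => by rw [← map_natCast (C (R := R)), coeff_C_mul]

section

variable (A : Type*) [CommRing A] [Algebra ℚ A]

noncomputable def expSubOneDivX : A⟦X⟧ := mk fun m => algebraMap ℚ A (1 / (m + 1)!)

theorem X_mul_expSubOneDivX : X * expSubOneDivX A = exp A - 1 := by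
  ext (_ | k)
  · simp
  · simp [expSubOneDivX, coeff_succ_X_mul, coeff_exp, coeff_one]

theorem bernoulliPowerSeries_mul_expSubOneDivX :
    bernoulliPowerSeries A * expSubOneDivX A = 1 :=
  X_mul_cancel <| by
    rw [mul_left_comm, X_mul_expSubOneDivX, bernoulliPowerSeries_mul_exp_sub_one, mul_one]

theorem X_dvd_one_sub_expSubOneDivX : X ∣ 1 - expSubOneDivX A := by
  rw [X_dvd_iff, ← coeff_zero_eq_constantCoeff_apply]
  simp [expSubOneDivX]

end

theorem coeff_exp_pow (l m : ℕ) : coeff m (exp ℝ ^ l) = (l : ℝ) ^ m / m ! := by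
  rw [exp_pow_eq_rescale_exp, coeff_rescale, coeff_exp, eq_ratCast]
  push_cast
  ring

theorem coeff_exp_sub_one_pow (m k : ℕ) :
    coeff m ((exp ℝ - 1) ^ k) = (k ! : ℝ) / m ! * stirlingS m k := by
  have hbinom : (exp ℝ - 1) ^ k =
      ∑ l ∈ range (k + 1), C ((-1 : ℝ) ^ (k - l) * k.choose l) * exp ℝ ^ l := by
    rw [sub_eq_add_neg, add_pow]
    refine sum_congr rfl fun l _ => ?_
    rw [map_mul, map_pow, map_neg, map_one, map_natCast]
    ring
  have hk : (k ! : ℝ) ≠ 0 := by positivity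
  rw [hbinom, map_sum, stirlingS, ← mul_assoc, div_mul_eq_mul_div, mul_one_div_cancel hk,
    div_mul_eq_mul_div, one_mul, sum_div]
  simp only [coeff_C_mul, coeff_exp_pow]
  exact sum_congr rfl fun l _ => by ring

theorem coeff_neg_expSubOneDivX_pow (n i : ℕ) :
    coeff n ((-expSubOneDivX ℝ) ^ i) = (-1) ^ i * ((i ! : ℝ) / (n + i)! * stirlingS (n + i) i) := by
  rw [← coeff_exp_sub_one_pow, ← X_mul_expSubOneDivX, mul_pow, coeff_X_pow_mul, neg_pow,
    ← map_one (C (R := ℝ)), ← map_neg, ← map_pow, coeff_C_mul]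

theorem stmt_2_general (n : ℕ) :
    (bernoulli n : ℝ) =
      ∑ i ∈ Finset.range (n + 1),
        (-1 : ℝ) ^ i * (((n + 1).choose (i + 1) : ℝ) / ((n + i).choose i : ℝ)) *
          stirlingS (n + i) i := by
  have hcoeff : (bernoulli n : ℝ) / n ! = coeff n (bernoulliPowerSeries ℝ) := by
    rw [bernoulliPowerSeries, coeff_mk, eq_ratCast]
    push_cast
    rfl
  rw [coeff_eq_sum_choose_mul_coeff_neg_pow (bernoulliPowerSeries_mul_expSubOneDivX ℝ)
    (X_dvd_one_sub_expSubOneDivX ℝ), div_eq_iff (by positivity)] at hcoeff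
  rw [hcoeff, sum_mul]
  refine sum_congr rfl fun i _ => ?_
  rw [coeff_neg_expSubOneDivX_pow, ← choose_symm_add, cast_add_choose]
  field_simp

theorem stmt_2 (n : ℕ) (hn : 1 ≤ n) :
    (bernoulli n : ℝ) =
      ∑ i ∈ Finset.range (n + 1),
        (-1 : ℝ) ^ i * (((n + 1).choose (i + 1) : ℝ) / ((n + i).choose i : ℝ)) *
          stirlingS (n + i) i :=
  stmt_2_general n
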